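/- Let c, d > 2 and n = c + d. In the polynomial ring ℂ[T_{ij}, T_∞ : 1 ≤ i < j ≤ n], let J be the ideal generated by T_∞, the binomials −T_{ik}T_{jl} + T_{il}T_{jk} for i < j ≤ c < k < l, and the trinomials T_{ij}T_{kl} − T_{ik}T_{jl} + T_{il}T_{jk} for all other index quadruples 1 ≤ i < j < k < l ≤ n. Then J is a prime ideal. -/

import Mathlib

/-!
Write `x_1, …, x_n, y_1, …, y_n` for new variables and call `{1, …, c}` and `{c+1, …, n}` the two
blocks. The algebra map `φ` with `T_∞ ↦ 0`, `T_ij ↦ x_i y_j - x_j y_i` when `i, j` lie in the same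
block and `T_ij ↦ x_i y_j` otherwise kills every generator of `J`; its kernel is prime since the
target is a domain, so it suffices to show `ker φ ⊆ J`.

Call a monomial standard if it avoids `T_∞` and no two of its factors `T_il`, `T_jk` are nested
(`i < j < k < l`). A generator of `J` rewrites a nested product `T_il T_jk` into products of
smaller `∑ (j - i)²`, so standard monomials span the quotient by `J`. The lex-leading monomial of
`φ` of a standard monomial is `∏ x_i y_j` over its factors `T_ij`, which records the multisets of
first and second indices; as the factors of a standard monomial form a chain in the product
order, these two multisets determine it. Hence `φ` is injective on the span of the standard
monomials, and `ker φ = J`.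
-/

open MvPolynomial

/-- Index set for the Plücker variables `T_{ij}`, `i < j` (0-indexed: `1 ≤ i` becomes `0 ≤ i`,
`j ≤ n` becomes `j.val < n`). -/
abbrev PIdx (n : ℕ) := {p : Fin n × Fin n // p.1 < p.2}

/-- Index set for the variables `T_{ij}` together with the extra variable `T_∞`. -/
abbrev Idx (n : ℕ) := PIdx n ⊕ Unit

/-- The variable `T_{ij}`. -/
noncomputable def W {n : ℕ} (i j : Fin n) (h : i < j) : MvPolynomial (Idx n) ℂ :=
  X (Sum.inl ⟨(i, j), h⟩)

/-- The variable `T_∞`. -/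
noncomputable def Tinf {n : ℕ} : MvPolynomial (Idx n) ℂ := X (Sum.inr ())

/-- Generators of the ideal `I`: `T_∞T_{ij}T_{kl} - T_{ik}T_{jl} + T_{il}T_{jk}` for
quadruples `i < j ≤ c < k < l` (1-indexed; `j ≤ c` is `j.val < c` and `c + 1 ≤ k` is
`c ≤ k.val` in 0-indexed terms), and the Plücker trinomials
`T_{ij}T_{kl} - T_{ik}T_{jl} + T_{il}T_{jk}` for all other quadruples `i < j < k < l`. -/
def IGens (c n : ℕ) : Set (MvPolynomial (Idx n) ℂ) :=
  {P | ∃ (i j k l : Fin n) (hij : i < j) (hjk : j < k) (hkl : k < l),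
    ((j.val < c ∧ c ≤ k.val) ∧
      P = Tinf * W i j hij * W k l hkl - W i k (hij.trans hjk) * W j l (hjk.trans hkl)
            + W i l (hij.trans (hjk.trans hkl)) * W j k hjk) ∨
    (¬(j.val < c ∧ c ≤ k.val) ∧
      P = W i j hij * W k l hkl - W i k (hij.trans hjk) * W j l (hjk.trans hkl)
            + W i l (hij.trans (hjk.trans hkl)) * W j k hjk)}

/-- Generators of the ideal `J = I + (T_∞)`: the variable `T_∞`, the binomials
`-T_{ik}T_{jl} + T_{il}T_{jk}` for quadruples `i < j ≤ c < k < l`, and the Plücker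
trinomials for all other quadruples `i < j < k < l`. -/
def JGens (c n : ℕ) : Set (MvPolynomial (Idx n) ℂ) :=
  insert Tinf
    {P | ∃ (i j k l : Fin n) (hij : i < j) (hjk : j < k) (hkl : k < l),
      ((j.val < c ∧ c ≤ k.val) ∧
        P = - W i k (hij.trans hjk) * W j l (hjk.trans hkl)
              + W i l (hij.trans (hjk.trans hkl)) * W j k hjk) ∨
      (¬(j.val < c ∧ c ≤ k.val) ∧
        P = W i j hij * W k l hkl - W i k (hij.trans hjk) * W j l (hjk.trans hkl)
              + W i l (hij.trans (hjk.trans hkl)) * W j k hjk)}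

open MonomialOrder Finset
open scoped MonomialOrder

section NonNested

variable {ι α β : Type*} [Fintype ι] [LinearOrder α] [LinearOrder β]

def IsNonNested (f : ι → α) (g : ι → β) (m : ι → ℕ) : Prop :=
  ∀ p q, m p ≠ 0 → m q ≠ 0 → f p < f q → g p ≤ g q

variable {f : ι → α} {g : ι → β} {m m' : ι → ℕ}

theorem IsNonNested.sum_le_and_le_eq_min (hm : IsNonNested f g m) (a : α) (b : β) :
    ∑ p with f p ≤ a ∧ g p ≤ b, m p = min (∑ p with f p ≤ a, m p) (∑ p with g p ≤ b, m p) := by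
  have hf := sum_filter_add_sum_filter_not {p | f p ≤ a} (fun p => g p ≤ b) m
  have hg := sum_filter_add_sum_filter_not {p | g p ≤ b} (fun p => f p ≤ a) m
  simp only [filter_filter, and_comm (a := g _ ≤ b)] at hf hg
  have : ∑ p with f p ≤ a ∧ ¬ g p ≤ b, m p = 0 ∨ ∑ p with ¬ f p ≤ a ∧ g p ≤ b, m p = 0 := by
    by_contra! h
    obtain ⟨p, hp, hmp⟩ := exists_ne_zero_of_sum_ne_zero h.1
    obtain ⟨q, hq, hmq⟩ := exists_ne_zero_of_sum_ne_zero h.2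
    simp only [mem_filter, mem_univ, true_and] at hp hq
    exact (hm p q hmp hmq (hp.1.trans_lt hq.1)).not_gt (hq.2.trans_lt hp.2)
  omega

theorem sum_le_eq_sum_fiberwise [Fintype α] (a : α) :
    ∑ p with f p ≤ a, m p = ∑ a' with a' ≤ a, ∑ p with f p = a', m p := by
  rw [sum_fiberwise_eq_sum_filter]
  simp

theorem IsNonNested.eq_of_sum_fiber_eq [Fintype α] [Fintype β]
    (hfg : Function.Injective fun p => (f p, g p)) (hm : IsNonNested f g m)
    (hm' : IsNonNested f g m') (hf : ∀ a, ∑ p with f p = a, m p = ∑ p with f p = a, m' p)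
    (hg : ∀ b, ∑ p with g p = b, m p = ∑ p with g p = b, m' p) : m = m' := by
  classical
  have hcum (q : ι) :
      ∑ p with f p ≤ f q ∧ g p ≤ g q, m p = ∑ p with f p ≤ f q ∧ g p ≤ g q, m' p := by
    simp only [hm.sum_le_and_le_eq_min, hm'.sum_le_and_le_eq_min, sum_le_eq_sum_fiberwise (f := f),
      sum_le_eq_sum_fiberwise (f := g), hf, hg]
  by_contra hne
  let : PartialOrder ι := PartialOrder.lift (fun p => (f p, g p)) hfg
  obtain ⟨q, hq, hmin⟩ := exists_minimal_of_wellFoundedLT _ (Function.ne_iff.mp hne)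
  have hq_mem : q ∈ ({p | f p ≤ f q ∧ g p ≤ g q} : Finset ι) := by simp
  have hrest : ∀ p ∈ ({p | f p ≤ f q ∧ g p ≤ g q} : Finset ι).erase q, m p = m' p := by
    intro p hp
    simp only [mem_erase, mem_filter, mem_univ, true_and] at hp
    by_contra hpq
    exact hp.1 (le_antisymm (show (f p, g p) ≤ (f q, g q) from hp.2) (hmin hpq hp.2))
  have hsum := hcum q
  rw [← add_sum_erase _ m hq_mem, ← add_sum_erase _ m' hq_mem, sum_congr rfl hrest] at hsum
  exact hq (add_right_cancel hsum)

end NonNested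

theorem MonomialOrder.sum_ne_zero_of_injOn_degree {σ R ι : Type*} [CommSemiring R]
    (m : MonomialOrder σ) {s : Finset ι} {F : ι → MvPolynomial σ R} (hs : s.Nonempty)
    (hF : ∀ i ∈ s, F i ≠ 0) (hd : Set.InjOn (m.degree ∘ F) s) : ∑ i ∈ s, F i ≠ 0 := by
  obtain ⟨i, hi, hmax⟩ := s.exists_max_image (fun i => m.toSyn (m.degree (F i))) hs
  intro h0
  have hcoeff := congrArg (coeff (m.degree (F i))) h0
  rw [coeff_sum, sum_eq_single_of_mem i hi, coeff_zero] at hcoeff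
  · exact m.coeff_degree_ne_zero_iff.mpr (hF i hi) hcoeff
  · refine fun j hj hji => m.coeff_eq_zero_of_lt ((hmax j hj).lt_of_ne fun h => hji ?_)
    exact hd hj hi (m.toSyn.injective h)

-- `x_u` is `X (Fin.castAdd n u)` and `y_u` is `X (Fin.natAdd n u)`; in the lexicographic order
-- all `x` precede all `y`, so `x_i y_j` leads `x_i y_j - x_j y_i` for `i < j`.
noncomputable def minorImage (c : ℕ) {n : ℕ} : Idx n → MvPolynomial (Fin (n + n)) ℂ
  | .inl P => X (Fin.castAdd n P.1.1) * X (Fin.natAdd n P.1.2) -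
      if (P.1.1.val < c ↔ P.1.2.val < c) then X (Fin.castAdd n P.1.2) * X (Fin.natAdd n P.1.1)
      else 0
  | .inr _ => 0

noncomputable def minorMap (c n : ℕ) : MvPolynomial (Idx n) ℂ →ₐ[ℂ] MvPolynomial (Fin (n + n)) ℂ :=
  aeval (minorImage c)

variable {c n : ℕ}

theorem minorMap_W (i j : Fin n) (h : i < j) :
    minorMap c n (W i j h) = X (Fin.castAdd n i) * X (Fin.natAdd n j) -
      if (i.val < c ↔ j.val < c) then X (Fin.castAdd n j) * X (Fin.natAdd n i) else 0 := by
  simp [minorMap, W, minorImage]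

theorem minorMap_Tinf : minorMap c n Tinf = 0 := by
  simp [minorMap, Tinf, minorImage]

theorem span_JGens_le_ker : Ideal.span (JGens c n) ≤ RingHom.ker (minorMap c n) := by
  rw [Ideal.span_le]
  rintro _ (rfl | ⟨i, j, k, l, hij, hjk, hkl, ⟨hmix, rfl⟩ | ⟨hmix, rfl⟩⟩)
  · exact minorMap_Tinf
  all_goals
    rw [Fin.lt_def] at hij hjk hkl
    simp only [SetLike.mem_coe, RingHom.mem_ker, map_add, map_sub, map_mul, map_neg, minorMap_W]
    split_ifs <;> first | ring1 | (exfalso; omega)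

noncomputable def leadExp {n : ℕ} : Idx n → (Fin (n + n) →₀ ℕ)
  | .inl P => .single (Fin.castAdd n P.1.1) 1 + .single (Fin.natAdd n P.1.2) 1
  | .inr _ => 0

theorem degree_minorImage_inl (P : PIdx n) :
    lex.degree (minorImage c (.inl P)) = leadExp (.inl P) := by
  have hP : P.1.1.val < P.1.2.val := P.2
  have hlt : .single (Fin.castAdd n P.1.2) 1 + .single (Fin.natAdd n P.1.1) 1 ≺[lex]
      leadExp (.inl P) := by
    rw [lex_lt_iff, Finsupp.Lex.lt_iff]
    refine ⟨Fin.castAdd n P.1.1, fun j (hj : j.val < P.1.1.val) => ?_, ?_⟩ <;>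
      simp only [leadExp, ofLex_toLex, Finsupp.add_apply, Finsupp.single_apply, Fin.ext_iff,
        Fin.val_castAdd, Fin.val_natAdd] <;>
      split_ifs <;> omega
  simp only [minorImage, X, monomial_mul, mul_one]
  split_ifs
  · rw [degree_sub_of_lt] <;> simp only [degree_monomial, one_ne_zero, if_false]
    · rfl
    · exact hlt
  · simp [degree_monomial, leadExp]

theorem minorImage_inl_ne_zero (P : PIdx n) : minorImage c (.inl P) ≠ 0 :=
  lex.ne_zero_of_degree_ne_zero (by simp [degree_minorImage_inl, leadExp])

theorem minorMap_monomial_ne_zero_and_degree (μ : Idx n →₀ ℕ) (hμ : μ (.inr ()) = 0) :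
    minorMap c n (monomial μ 1) ≠ 0 ∧
      lex.degree (minorMap c n (monomial μ 1)) = Finsupp.weight leadExp μ := by
  have hX : ∀ p ∈ μ.support, minorMap c n (X p) ^ μ p ≠ 0 ∧
      lex.degree (minorMap c n (X p) ^ μ p) = μ p • leadExp p := by
    rintro (P | ⟨⟩) hp
    · simp only [minorMap, aeval_X]
      exact ⟨pow_ne_zero _ (minorImage_inl_ne_zero P), by rw [degree_pow, degree_minorImage_inl]⟩
    · exact absurd hμ (Finsupp.mem_support_iff.mp hp)
  have hprod : minorMap c n (monomial μ 1) = ∏ p ∈ μ.support, minorMap c n (X p) ^ μ p := by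
    rw [monomial_eq, C_1, one_mul, Finsupp.prod, map_prod]
    simp only [map_pow]
  rw [hprod, degree_prod fun p hp => (hX p hp).1, prod_ne_zero_iff, Finsupp.weight_apply,
    Finsupp.sum]
  exact ⟨fun p hp => (hX p hp).1, sum_congr rfl fun p hp => (hX p hp).2⟩

theorem weight_leadExp_castAdd (μ : Idx n →₀ ℕ) (u : Fin n) :
    Finsupp.weight leadExp μ (Fin.castAdd n u) = ∑ P : PIdx n with P.1.1 = u, μ (.inl P) := by
  rw [Finsupp.weight_apply, Finsupp.sum_fintype _ _ (by simp), Finsupp.finsetSum_apply,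
    Fintype.sum_sum_type]
  simp only [leadExp, Finsupp.smul_apply, Finsupp.add_apply, Finsupp.single_apply, Fin.ext_iff,
    Fin.val_castAdd, Fin.val_natAdd, Finsupp.coe_zero, Pi.zero_apply, smul_zero, sum_const_zero,
    add_zero, sum_filter]
  refine sum_congr rfl fun P _ => ?_
  have : n + P.1.2.val ≠ u.val := by omega
  simp [this]

theorem weight_leadExp_natAdd (μ : Idx n →₀ ℕ) (u : Fin n) :
    Finsupp.weight leadExp μ (Fin.natAdd n u) = ∑ P : PIdx n with P.1.2 = u, μ (.inl P) := by
  rw [Finsupp.weight_apply, Finsupp.sum_fintype _ _ (by simp), Finsupp.finsetSum_apply,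
    Fintype.sum_sum_type]
  simp only [leadExp, Finsupp.smul_apply, Finsupp.add_apply, Finsupp.single_apply, Fin.ext_iff,
    Fin.val_castAdd, Fin.val_natAdd, Finsupp.coe_zero, Pi.zero_apply, smul_zero, sum_const_zero,
    add_zero, sum_filter]
  refine sum_congr rfl fun P _ => ?_
  have : P.1.1.val ≠ n + u.val := by omega
  simp [this]

def IsStandard (μ : Idx n →₀ ℕ) : Prop :=
  μ (.inr ()) = 0 ∧ IsNonNested (fun P : PIdx n => P.1.1) (fun P => P.1.2) (fun P => μ (.inl P))

theorem IsStandard.eq_of_weight_leadExp_eq {μ ν : Idx n →₀ ℕ} (hμ : IsStandard μ)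
    (hν : IsStandard ν) (h : Finsupp.weight leadExp μ = Finsupp.weight leadExp ν) : μ = ν := by
  have hpairs := hμ.2.eq_of_sum_fiber_eq (fun P Q hPQ => Subtype.ext hPQ) hν.2
    (fun u => by rw [← weight_leadExp_castAdd, ← weight_leadExp_castAdd, h])
    (fun u => by rw [← weight_leadExp_natAdd, ← weight_leadExp_natAdd, h])
  ext (P | ⟨⟩)
  · exact congrFun hpairs P
  · rw [hμ.1, hν.1]

theorem eq_zero_of_minorMap_eq_zero {f : MvPolynomial (Idx n) ℂ}
    (hf : f ∈ restrictSupport ℂ {μ | IsStandard μ}) (h0 : minorMap c n f = 0) : f = 0 := by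
  by_contra hne
  have hsum : minorMap c n f = ∑ μ ∈ f.support, coeff μ f • minorMap c n (monomial μ 1) := by
    conv_lhs => rw [f.as_sum]
    simp only [map_sum, ← map_smul, smul_eq_mul, mul_one]
  have hterm (μ) (hμ : μ ∈ f.support) : coeff μ f • minorMap c n (monomial μ 1) ≠ 0 ∧
      lex.degree (coeff μ f • minorMap c n (monomial μ 1)) = Finsupp.weight leadExp μ := by
    have hc : coeff μ f ≠ 0 := mem_support_iff.mp hμ
    obtain ⟨hne, hdeg⟩ := minorMap_monomial_ne_zero_and_degree (c := c) μ (hf hμ).1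
    exact ⟨smul_ne_zero hc hne, by rw [degree_smul_of_isRegular (IsRegular.of_ne_zero hc), hdeg]⟩
  refine lex.sum_ne_zero_of_injOn_degree (support_nonempty.mpr hne) (fun μ hμ => (hterm μ hμ).1)
    (fun μ hμ ν hν h => ?_) (hsum ▸ h0)
  simp only [Function.comp_apply, (hterm μ hμ).2, (hterm ν hν).2] at h
  exact (hf hμ).eq_of_weight_leadExp_eq (hf hν) h

theorem exists_nested_straightening {w x y z : Fin n} (hwx : w < x) (hxy : x < y) (hyz : y < z) :
    ∃ r : ℂ, W w z (hwx.trans (hxy.trans hyz)) * W x y hxy -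
      W w y (hwx.trans hxy) * W x z (hxy.trans hyz) - r • (W w x hwx * W y z hyz) ∈
        Ideal.span (JGens c n) := by
  by_cases hmix : x.val < c ∧ c ≤ y.val
  · refine ⟨0, ?_⟩
    convert SetLike.mem_coe.mp (Ideal.subset_span (s := JGens c n)
      (Set.mem_insert_of_mem _ ⟨w, x, y, z, hwx, hxy, hyz, .inl ⟨hmix, rfl⟩⟩)) using 1
    rw [zero_smul]
    ring
  · refine ⟨-1, ?_⟩
    convert SetLike.mem_coe.mp (Ideal.subset_span (s := JGens c n)
      (Set.mem_insert_of_mem _ ⟨w, x, y, z, hwx, hxy, hyz, .inr ⟨hmix, rfl⟩⟩)) using 1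
    rw [neg_smul, one_smul]
    ring

def nestingWeight : Idx n → ℕ
  | .inl P => (P.1.2.val - P.1.1.val) ^ 2
  | .inr _ => 0

theorem sq_sub_add_sq_sub_lt {w x y z : ℕ} (hwx : w < x) (hxy : x < y) (hyz : y < z) :
    (y - w) ^ 2 + (z - x) ^ 2 < (z - w) ^ 2 + (y - x) ^ 2 ∧
      (x - w) ^ 2 + (z - y) ^ 2 < (z - w) ^ 2 + (y - x) ^ 2 := by
  obtain ⟨a, rfl⟩ := Nat.exists_eq_add_of_lt hwx
  obtain ⟨b, rfl⟩ := Nat.exists_eq_add_of_lt hxy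
  obtain ⟨e, rfl⟩ := Nat.exists_eq_add_of_lt hyz
  simp only [Nat.add_sub_cancel_left, add_assoc, Nat.add_sub_add_left]
  constructor <;> ring_nf <;> nlinarith

theorem W_mul_W_mul_monomial_mem_of_nested {w x y z : Fin n} (hwx : w < x) (hxy : x < y)
    (hyz : y < z) (ν : Idx n →₀ ℕ)
    (hsmaller : ∀ a b : PIdx n, nestingWeight (.inl a) + nestingWeight (.inl b) <
        (z.val - w.val) ^ 2 + (y.val - x.val) ^ 2 →
      W a.1.1 a.1.2 a.2 * W b.1.1 b.1.2 b.2 * monomial ν 1 ∈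
        restrictSupport ℂ {μ | IsStandard μ} ⊔ (Ideal.span (JGens c n)).restrictScalars ℂ) :
    W w z (hwx.trans (hxy.trans hyz)) * W x y hxy * monomial ν 1 ∈
      restrictSupport ℂ {μ | IsStandard μ} ⊔ (Ideal.span (JGens c n)).restrictScalars ℂ := by
  obtain ⟨r, hr⟩ := exists_nested_straightening (c := c) hwx hxy hyz
  have hsplit : W w z (hwx.trans (hxy.trans hyz)) * W x y hxy * monomial ν 1 =
      (W w z (hwx.trans (hxy.trans hyz)) * W x y hxy -
        W w y (hwx.trans hxy) * W x z (hxy.trans hyz) - r • (W w x hwx * W y z hyz)) *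
          monomial ν 1 +
      W w y (hwx.trans hxy) * W x z (hxy.trans hyz) * monomial ν 1 +
      r • (W w x hwx * W y z hyz * monomial ν 1) := by
    simp only [smul_eq_C_mul]
    ring
  have hw := sq_sub_add_sq_sub_lt (Fin.lt_def.mp hwx) (Fin.lt_def.mp hxy) (Fin.lt_def.mp hyz)
  rw [hsplit]
  refine add_mem (add_mem (Submodule.mem_sup_right (Ideal.mul_mem_right _ _ hr)) ?_)
    (Submodule.smul_mem _ _ ?_)
  · exact hsmaller ⟨(w, y), hwx.trans hxy⟩ ⟨(x, z), hxy.trans hyz⟩ hw.1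
  · exact hsmaller ⟨(w, x), hwx⟩ ⟨(y, z), hyz⟩ hw.2

theorem monomial_mem_restrictSupport_sup (μ : Idx n →₀ ℕ) :
    monomial μ (1 : ℂ) ∈
      restrictSupport ℂ {μ | IsStandard μ} ⊔ (Ideal.span (JGens c n)).restrictScalars ℂ := by
  induction hN : Finsupp.weight nestingWeight μ using Nat.strong_induction_on generalizing μ with
  | _ N ih =>
  by_cases hinf : μ (.inr ()) = 0
  swap
  · apply Submodule.mem_sup_right
    rw [← Finsupp.sub_add_single_one_cancel hinf, monomial_add_single, pow_one]
    exact Ideal.mul_mem_left _ _ (Ideal.subset_span (Set.mem_insert _ _))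
  by_cases hstd : IsStandard μ
  · exact Submodule.mem_sup_left ((monomial_mem_restrictSupport (R := ℂ)).mpr (.inl hstd))
  obtain ⟨⟨⟨w, z⟩, hwz⟩, ⟨⟨x, y⟩, hxy⟩, hP, hQ, hwx, hyz⟩ : ∃ P Q : PIdx n,
      μ (.inl P) ≠ 0 ∧ μ (.inl Q) ≠ 0 ∧ P.1.1 < Q.1.1 ∧ Q.1.2 < P.1.2 := by
    simpa [IsStandard, IsNonNested, hinf] using hstd
  set P : Idx n := .inl ⟨(w, z), hwz⟩
  set Q : Idx n := .inl ⟨(x, y), hxy⟩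
  set ν := μ - .single P 1 - .single Q 1
  have hμ : μ = ν + .single Q 1 + .single P 1 := by
    have hQ' : (μ - .single P 1) Q ≠ 0 := by
      simpa [P, Q, Finsupp.single_apply, hwx.ne'] using hQ
    rw [Finsupp.sub_add_single_one_cancel hQ', Finsupp.sub_add_single_one_cancel hP]
  have hmono (a b : PIdx n) : W a.1.1 a.1.2 a.2 * W b.1.1 b.1.2 b.2 * monomial ν 1 =
      monomial (ν + .single (.inl b) 1 + .single (.inl a) 1) (1 : ℂ) := by
    simp only [W, monomial_add_single, pow_one]
    ring
  rw [hμ, ← hmono ⟨(w, z), hwz⟩ ⟨(x, y), hxy⟩]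
  refine W_mul_W_mul_monomial_mem_of_nested hwx hxy hyz ν fun a b hab => ?_
  rw [hmono]
  refine ih _ ?_ _ rfl
  rw [← hN, hμ]
  simp only [map_add, Finsupp.weight_single, one_smul]
  simp only [P, Q, nestingWeight] at hab ⊢
  omega

theorem restrictSupport_sup_eq_top :
    restrictSupport ℂ {μ | IsStandard μ} ⊔ (Ideal.span (JGens c n)).restrictScalars ℂ = ⊤ := by
  refine eq_top_iff.mpr fun f _ => ?_
  rw [f.as_sum]
  refine Submodule.sum_mem _ fun μ _ => ?_
  rw [← mul_one (coeff μ f), ← smul_eq_mul, ← smul_monomial]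
  exact Submodule.smul_mem _ _ (monomial_mem_restrictSupport_sup μ)

theorem span_JGens_eq_ker : Ideal.span (JGens c n) = RingHom.ker (minorMap c n) := by
  refine le_antisymm span_JGens_le_ker fun f hf => ?_
  obtain ⟨s, hs, g, hg, rfl⟩ := Submodule.mem_sup.mp (restrictSupport_sup_eq_top (c := c) ▸
    Submodule.mem_top (x := f))
  have hs0 : minorMap c n s = 0 := by
    rwa [RingHom.mem_ker, map_add, span_JGens_le_ker hg, add_zero] at hf
  rw [eq_zero_of_minorMap_eq_zero hs hs0, zero_add]
  exact hg

theorem stmt_7_general (c d : ℕ) :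
    (Ideal.span (JGens c (c + d))).IsPrime := by
  rw [span_JGens_eq_ker]
  exact RingHom.ker_isPrime _

/-- For `c, d > 2` and `n = c + d`, the ideal `J` generated by `T_∞`, the binomials
`-T_{ik}T_{jl} + T_{il}T_{jk}` for `i < j ≤ c < k < l`, and the Plücker trinomials
for all other quadruples, is prime. -/
theorem stmt_7 (c d : ℕ) (hc : 2 < c) (hd : 2 < d) :
    (Ideal.span (JGens c (c + d))).IsPrime :=
  stmt_7_general c d
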